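/- arXiv:1608.07571 — 2 statements merged into one kernel-verified Lean document; each statement's English description precedes it below -/
import Mathlib

section
/- Commutator estimate for s < 1/2: let d ≥ 1, s ∈ (0,1/2), and let K : ℝ^d × ℝ^d → ℝ be a measurable kernel satisfying the tail bounds with constant Λ. Let Ω ⊆ ℝ^d be open, D ⊆ Ω compact with δ := dist(D, ℝ^d ∖ Ω) ∈ (0,∞), let φ : ℝ^d → ℝ be bounded and continuously differentiable with bounded gradient and supported in D, and let f ∈ L^∞(ℝ^d) with f restricted to Ω in L²(Ω). Then for every v ∈ ℝ^d the commutator integral C[φ,f](v) = ∫_{ℝ^d} f(v') ( φ(v') − φ(v) ) K(v,v') dv' converges absolutely, and there exist measurable functions h₁, h₂ with C[φ,f] = h₁ + h₂ and a constant C depending only on d, s and Λ such that: ‖h₁‖_{L^∞(ℝ^d)} ≤ C ‖φ‖_{L^∞} ‖f‖_{L^∞(ℝ^d)} δ^{−2s}; ‖h₁‖_{L²(ℝ^d ∖ Ω)} ≤ C ‖φ‖_{L^∞} ‖f‖_{L²(D)} δ^{−2s}; h₂ = 0 outside Ω; and ‖h₂‖_{L²(ℝ^d)} ≤ C ( ‖φ‖_{L^∞}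 + ‖∇φ‖_{L^∞} ) ‖f‖_{L²(Ω)}. -/
open MeasureTheory Metric Set

noncomputable section

open scoped ENNReal

lemma dyadic_pick {t : ℝ} (h0 : 0 < t) (h1 : t < 1) :
    ∃ k : ℕ, (2:ℝ)⁻¹ ^ (k+1) ≤ t ∧ t < (2:ℝ)⁻¹ ^ k := by
  classical
  have hhalf0 : (0:ℝ) ≤ 2⁻¹ := by norm_num
  have hhalf : (2:ℝ)⁻¹ < 1 := by norm_num
  obtain ⟨n, hn⟩ := exists_pow_lt_of_lt_one h0 hhalf
  have hQ : ∃ n : ℕ, (2:ℝ)⁻¹ ^ (n+1) ≤ t :=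
    ⟨n, le_of_lt (lt_of_le_of_lt (pow_le_pow_of_le_one hhalf0 hhalf.le (Nat.le_succ n)) hn)⟩
  refine ⟨Nat.find hQ, Nat.find_spec hQ, ?_⟩
  rcases Nat.eq_zero_or_pos (Nat.find hQ) with h | h
  · rw [h]; simpa using h1
  · obtain ⟨m, hm⟩ := Nat.exists_eq_succ_of_ne_zero h.ne'
    rw [hm]
    have := Nat.find_min hQ (by omega : m < Nat.find hQ)
    push_neg at this
    simpa using this

lemma ennreal_sq (x : ℝ≥0∞) : x ^ (2:ℝ) = x * x := by
  rw [show (2:ℝ) = ((2:ℕ):ℝ) by norm_num, ENNReal.rpow_natCast, sq]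

lemma ennreal_half_sq (x : ℝ≥0∞) : (x ^ (1/2 : ℝ)) ^ (2:ℝ) = x := by
  rw [← ENNReal.rpow_mul]; norm_num

lemma ennreal_sq_half (x : ℝ≥0∞) : (x ^ (2:ℝ)) ^ (1/2 : ℝ) = x := by
  rw [← ENNReal.rpow_mul]; norm_num

lemma eLpNorm_two_eq {α : Type*} [MeasurableSpace α] (μ : Measure α) (h : α → ℝ) :
    eLpNorm h 2 μ = (∫⁻ x, ENNReal.ofReal |h x| ^ (2:ℝ) ∂μ) ^ (1/2 : ℝ) := by
  rw [eLpNorm_eq_lintegral_rpow_enorm_toReal (by norm_num) (by norm_num)]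
  simp only [ENNReal.toReal_ofNat]
  congr 1
  refine lintegral_congr fun x => ?_
  rw [Real.enorm_eq_ofReal_abs]

lemma tail_min_bound {d : ℕ} {s lam : ℝ} (hs0 : 0 < s) (hs : s < 1/2) (hlam : 0 < lam)
    (g : EuclideanSpace ℝ (Fin d) → ℝ) (v : EuclideanSpace ℝ (Fin d))
    (H : ∀ r : ℝ, 0 < r →
      (∫⁻ v' in (ball v r)ᶜ, ENNReal.ofReal |g v'|) ≤ ENNReal.ofReal (lam * r ^ (-(2*s))))
    (a b : ℝ) (ha : 0 ≤ a) (hb : 0 ≤ b) :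
    (∫⁻ v', ENNReal.ofReal (min a (b * dist v' v) * |g v'|)) ≤
      ENNReal.ofReal (a * lam + b * (lam * (2:ℝ) ^ (2*s) / (1 - (2:ℝ) ^ (2*s - 1)))) := by
  set q : ℝ := (2:ℝ) ^ (2*s - 1) with hq
  have hq0 : 0 ≤ q := le_of_lt (Real.rpow_pos_of_pos two_pos _)
  have hq1 : q < 1 := Real.rpow_lt_one_of_one_lt_of_neg one_lt_two (by linarith)
  set F : EuclideanSpace ℝ (Fin d) → ℝ≥0∞ :=
    fun v' => ENNReal.ofReal (min a (b * dist v' v) * |g v'|) with hF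
  have hFa : ∀ v', F v' ≤ ENNReal.ofReal (a * |g v'|) := fun v' =>
    ENNReal.ofReal_le_ofReal (mul_le_mul_of_nonneg_right (min_le_left _ _) (abs_nonneg _))
  have hsplit : (∫⁻ v', F v') ≤ (∫⁻ v' in ball v 1, F v') + ∫⁻ v' in (ball v 1)ᶜ, F v' := by
    rw [← setLIntegral_univ F, ← union_compl_self (ball v 1)]
    exact lintegral_union_le _ _ _
  have houter : (∫⁻ v' in (ball v 1)ᶜ, F v') ≤ ENNReal.ofReal (a * lam) := by
    calc (∫⁻ v' in (ball v 1)ᶜ, F v')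
        ≤ ∫⁻ v' in (ball v 1)ᶜ, ENNReal.ofReal a * ENNReal.ofReal |g v'| := by
          refine lintegral_mono fun v' => ?_
          rw [← ENNReal.ofReal_mul ha]; exact hFa v'
      _ = ENNReal.ofReal a * ∫⁻ v' in (ball v 1)ᶜ, ENNReal.ofReal |g v'| :=
          lintegral_const_mul' _ _ ENNReal.ofReal_ne_top
      _ ≤ ENNReal.ofReal a * ENNReal.ofReal (lam * (1:ℝ) ^ (-(2*s))) :=
          mul_le_mul_right (H 1 one_pos) _
      _ = ENNReal.ofReal (a * lam) := by
          rw [Real.one_rpow, mul_one, ← ENNReal.ofReal_mul ha]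
  set A : ℕ → Set (EuclideanSpace ℝ (Fin d)) :=
    fun k => ball v ((2:ℝ)⁻¹^k) \ ball v ((2:ℝ)⁻¹^(k+1)) with hA
  have hAm : ∀ k, MeasurableSet (A k) := fun k =>
    measurableSet_ball.diff measurableSet_ball
  have hcov : ball v 1 ⊆ {v} ∪ ⋃ k, A k := by
    intro x hx
    rcases eq_or_ne x v with h | h
    · exact Or.inl h
    · obtain ⟨k, hk1, hk2⟩ := dyadic_pick (dist_pos.2 h) (mem_ball.mp hx)
      exact Or.inr (mem_iUnion.2 ⟨k, mem_ball.mpr hk2,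
        fun hc => absurd (mem_ball.mp hc) (not_lt.2 hk1)⟩)
  have h0 : (∫⁻ v' in {v}, F v') = 0 := by
    rw [lintegral_singleton]
    have hFv : F v = 0 := by
      simp only [hF, dist_self, mul_zero, min_eq_right ha, zero_mul, ENNReal.ofReal_zero]
    rw [hFv, zero_mul]
  have hterm : ∀ k : ℕ, (b * (2:ℝ)⁻¹^k) * (lam * ((2:ℝ)⁻¹^(k+1)) ^ (-(2*s)))
      = b * (lam * (2:ℝ)^(2*s)) * q^k := by
    intro k
    have h2 : ∀ m:ℕ, ((2:ℝ)⁻¹)^m = (2:ℝ) ^ (-(m:ℝ)) := by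
      intro m; rw [Real.rpow_neg two_pos.le, Real.rpow_natCast, inv_pow]
    have h3 : (((2:ℝ)⁻¹)^(k+1) : ℝ) ^ (-(2*s)) = (2:ℝ) ^ ((((k+1:ℕ)):ℝ)*(2*s)) := by
      rw [h2 (k+1), ← Real.rpow_mul two_pos.le]
      congr 1; ring
    rw [h2 k, h3, ← Real.rpow_natCast q k, hq, ← Real.rpow_mul two_pos.le]
    have key2 : (2:ℝ)^(-(k:ℝ)) * 2^((((k+1:ℕ)):ℝ)*(2*s)) = 2^(2*s) * 2^((2*s-1)*(k:ℝ)) := by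
      rw [← Real.rpow_add two_pos, ← Real.rpow_add two_pos]
      congr 1; push_cast; ring
    linear_combination b * lam * key2
  have hann : ∀ k : ℕ, (∫⁻ v' in A k, F v') ≤
      ENNReal.ofReal (b * (lam * (2:ℝ)^(2*s)) * q^k) := by
    intro k
    have hsub : A k ⊆ (ball v ((2:ℝ)⁻¹^(k+1)))ᶜ := fun x hx => hx.2
    have hr : (0:ℝ) < (2:ℝ)⁻¹^(k+1) := by positivity
    calc (∫⁻ v' in A k, F v')
        ≤ ∫⁻ v' in A k, ENNReal.ofReal (b * (2:ℝ)⁻¹^k) * ENNReal.ofReal |g v'| := by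
          refine setLIntegral_mono' (hAm k) fun x hx => ?_
          rw [← ENNReal.ofReal_mul (by positivity)]
          refine ENNReal.ofReal_le_ofReal
            (mul_le_mul_of_nonneg_right ?_ (abs_nonneg _))
          exact le_trans (min_le_right _ _)
            (mul_le_mul_of_nonneg_left (le_of_lt (mem_ball.mp hx.1)) hb)
      _ ≤ ∫⁻ v' in (ball v ((2:ℝ)⁻¹^(k+1)))ᶜ,
            ENNReal.ofReal (b * (2:ℝ)⁻¹^k) * ENNReal.ofReal |g v'| :=
          lintegral_mono_set hsub
      _ = ENNReal.ofReal (b * (2:ℝ)⁻¹^k) *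
            ∫⁻ v' in (ball v ((2:ℝ)⁻¹^(k+1)))ᶜ, ENNReal.ofReal |g v'| :=
          lintegral_const_mul' _ _ ENNReal.ofReal_ne_top
      _ ≤ ENNReal.ofReal (b * (2:ℝ)⁻¹^k) *
            ENNReal.ofReal (lam * ((2:ℝ)⁻¹^(k+1)) ^ (-(2*s))) :=
          mul_le_mul_right (H _ hr) _
      _ = ENNReal.ofReal (b * (lam * (2:ℝ)^(2*s)) * q^k) := by
          rw [← ENNReal.ofReal_mul (by positivity)]; exact congrArg _ (hterm k)
  have hX0 : (0:ℝ) ≤ b * (lam * (2:ℝ)^(2*s)) := by positivity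
  have h1q : (0:ℝ) < 1 - q := by linarith
  have hinner : (∫⁻ v' in ball v 1, F v') ≤
      ENNReal.ofReal (b * (lam * (2:ℝ)^(2*s)) * (1-q)⁻¹) := by
    calc (∫⁻ v' in ball v 1, F v')
        ≤ ∫⁻ v' in {v} ∪ ⋃ k, A k, F v' := lintegral_mono_set hcov
      _ ≤ (∫⁻ v' in {v}, F v') + ∫⁻ v' in ⋃ k, A k, F v' := lintegral_union_le _ _ _
      _ ≤ 0 + ∑' k, ∫⁻ v' in A k, F v' := by
          rw [h0]; exact add_le_add le_rfl (lintegral_iUnion_le _ _)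
      _ ≤ ∑' k, ENNReal.ofReal (b * (lam * (2:ℝ)^(2*s)) * q^k) := by
          rw [zero_add]; exact ENNReal.tsum_le_tsum hann
      _ = ENNReal.ofReal (b * (lam * (2:ℝ)^(2*s)) * (1-q)⁻¹) := by
          rw [← ENNReal.ofReal_tsum_of_nonneg
            (fun k => mul_nonneg hX0 (pow_nonneg hq0 k))
            (Summable.mul_left _ (summable_geometric_of_lt_one hq0 hq1))]
          rw [tsum_mul_left, tsum_geometric_of_lt_one hq0 hq1]
  calc (∫⁻ v', F v') ≤ (∫⁻ v' in ball v 1, F v') + ∫⁻ v' in (ball v 1)ᶜ, F v' := hsplit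
    _ ≤ ENNReal.ofReal (b * (lam * (2:ℝ)^(2*s)) * (1-q)⁻¹) + ENNReal.ofReal (a * lam) :=
        add_le_add hinner houter
    _ = ENNReal.ofReal (a * lam + b * (lam * (2:ℝ)^(2*s) / (1 - q))) := by
        rw [← ENNReal.ofReal_add (mul_nonneg hX0 (inv_nonneg.2 h1q.le)) (by positivity),
          div_eq_mul_inv]
        congr 1; ring

lemma schur_test {α : Type*} [MeasurableSpace α] (μ : Measure α) [SFinite μ]
    (A B : Set α) (hA : MeasurableSet A) (hB : MeasurableSet B)
    (G : α → α → ℝ≥0∞) (hG : Measurable (Function.uncurry G))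
    (g : α → ℝ≥0∞) (hg : Measurable g) (M : ℝ≥0∞) (hM : M ≠ ⊤)
    (row : ∀ v ∈ A, (∫⁻ v' in B, G v v' ∂μ) ≤ M)
    (col : ∀ v' ∈ B, (∫⁻ v in A, G v v' ∂μ) ≤ M) :
    (∫⁻ v in A, (∫⁻ v' in B, g v' * G v v' ∂μ) ^ (2:ℝ) ∂μ) ≤
      M ^ (2:ℝ) * ∫⁻ v' in B, (g v') ^ (2:ℝ) ∂μ := by
  have hGv : ∀ v, Measurable (fun v' => G v v') := fun v =>
    hG.comp (measurable_prodMk_left)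
  have hGv' : ∀ v', Measurable (fun v => G v v') := fun v' =>
    hG.comp (measurable_prodMk_right)
  have hCS : ∀ v ∈ A, (∫⁻ v' in B, g v' * G v v' ∂μ) ^ (2:ℝ) ≤
      M * ∫⁻ v' in B, (g v') ^ (2:ℝ) * G v v' ∂μ := by
    intro v hv
    have hconj : Real.HolderConjugate 2 2 := by constructor <;> norm_num
    have h1 : (∫⁻ v' in B, g v' * G v v' ∂μ) ≤
        (∫⁻ v' in B, (g v') ^ (2:ℝ) * G v v' ∂μ) ^ (1/2 : ℝ) *
          (∫⁻ v' in B, G v v' ∂μ) ^ (1/2 : ℝ) := by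
      have := ENNReal.lintegral_mul_le_Lp_mul_Lq (μ.restrict B) hconj
        (f := fun v' => g v' * (G v v') ^ (1/2:ℝ)) (g := fun v' => (G v v') ^ (1/2:ℝ))
        ((hg.mul ((hGv v).pow_const _)).aemeasurable)
        (((hGv v).pow_const _).aemeasurable)
      calc (∫⁻ v' in B, g v' * G v v' ∂μ)
          = ∫⁻ v' in B, (g v' * (G v v') ^ (1/2:ℝ)) * (G v v') ^ (1/2:ℝ) ∂μ := by
            refine lintegral_congr fun v' => ?_
            rw [mul_assoc, ← ennreal_sq, ennreal_half_sq]
        _ ≤ (∫⁻ v' in B, (g v' * (G v v') ^ (1/2:ℝ)) ^ (2:ℝ) ∂μ) ^ (1/(2:ℝ)) *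
              (∫⁻ v' in B, ((G v v') ^ (1/2:ℝ)) ^ (2:ℝ) ∂μ) ^ (1/(2:ℝ)) := this
        _ = (∫⁻ v' in B, (g v') ^ (2:ℝ) * G v v' ∂μ) ^ (1/2 : ℝ) *
              (∫⁻ v' in B, G v v' ∂μ) ^ (1/2 : ℝ) := by
            congr 1
            · congr 1; refine lintegral_congr fun v' => ?_
              rw [ENNReal.mul_rpow_of_nonneg _ _ (by norm_num : (0:ℝ) ≤ 2),
                ennreal_half_sq]
            · congr 1; refine lintegral_congr fun v' => ?_
              rw [ennreal_half_sq]
    calc (∫⁻ v' in B, g v' * G v v' ∂μ) ^ (2:ℝ)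
        ≤ ((∫⁻ v' in B, (g v') ^ (2:ℝ) * G v v' ∂μ) ^ (1/2 : ℝ) *
            (∫⁻ v' in B, G v v' ∂μ) ^ (1/2 : ℝ)) ^ (2:ℝ) :=
          ENNReal.rpow_le_rpow h1 (by norm_num)
      _ = (∫⁻ v' in B, (g v') ^ (2:ℝ) * G v v' ∂μ) * (∫⁻ v' in B, G v v' ∂μ) := by
          rw [ENNReal.mul_rpow_of_nonneg _ _ (by norm_num : (0:ℝ) ≤ 2),
            ennreal_half_sq, ennreal_half_sq]
      _ ≤ (∫⁻ v' in B, (g v') ^ (2:ℝ) * G v v' ∂μ) * M :=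
          mul_le_mul_right (row v hv) _
      _ = M * ∫⁻ v' in B, (g v') ^ (2:ℝ) * G v v' ∂μ := mul_comm _ _
  calc (∫⁻ v in A, (∫⁻ v' in B, g v' * G v v' ∂μ) ^ (2:ℝ) ∂μ)
      ≤ ∫⁻ v in A, M * ∫⁻ v' in B, (g v') ^ (2:ℝ) * G v v' ∂μ ∂μ :=
        setLIntegral_mono' hA hCS
    _ = M * ∫⁻ v in A, ∫⁻ v' in B, (g v') ^ (2:ℝ) * G v v' ∂μ ∂μ :=
        lintegral_const_mul' _ _ hM
    _ = M * ∫⁻ v' in B, ∫⁻ v in A, (g v') ^ (2:ℝ) * G v v' ∂μ ∂μ := by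
        congr 1
        refine lintegral_lintegral_swap ?_
        apply AEMeasurable.mul
        · exact ((hg.comp measurable_snd).pow_const _).aemeasurable
        · exact hG.aemeasurable
    _ ≤ M * ∫⁻ v' in B, M * (g v') ^ (2:ℝ) ∂μ := by
        refine mul_le_mul_right (setLIntegral_mono' hB fun v' hv' => ?_) _
        rw [lintegral_const_mul _ (hGv' v')]
        rw [mul_comm]
        exact mul_le_mul_left (col v' hv') _
    _ = M ^ (2:ℝ) * ∫⁻ v' in B, (g v') ^ (2:ℝ) ∂μ := by
        rw [lintegral_const_mul' _ _ hM, ← mul_assoc, ennreal_sq]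

/-- A measurable kernel `K : ℝ^d × ℝ^d → ℝ` satisfies the tail bounds with constant `Λ`. -/
def TailBounds (d : ℕ) (s Λ : ℝ)
    (K : EuclideanSpace ℝ (Fin d) → EuclideanSpace ℝ (Fin d) → ℝ) : Prop :=
  ∀ (v : EuclideanSpace ℝ (Fin d)) (r : ℝ), 0 < r →
    (∫⁻ v' in (Metric.ball v r)ᶜ, ENNReal.ofReal |K v v'|) ≤
        ENNReal.ofReal (Λ * r ^ (-(2 * s))) ∧
    (∫⁻ v' in (Metric.ball v r)ᶜ, ENNReal.ofReal |K v' v|) ≤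
        ENNReal.ofReal (Λ * r ^ (-(2 * s)))

set_option maxHeartbeats 2000000 in
/-- **Commutator estimate for `s < 1/2`.** Let `K` satisfy the tail bounds with constant
`Λ`, `D ⊆ Ω` with `D` compact, `Ω` open and `δ > 0` a lower bound for
`dist(D, ℝ^d ∖ Ω)`, let `φ` be bounded and `C¹` with bounded gradient, supported in `D`,
and let `f` be bounded and square integrable on `Ω`. Then the commutator
`C[φ,f](v) = ∫ f(v') (φ(v') - φ(v)) K(v,v') dv'` converges absolutely for every `v` and
splits as `h₁ + h₂` with `‖h₁‖_{L^∞} ≲ ‖φ‖_∞ ‖f‖_∞ δ^{-2s}`,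
`‖h₁‖_{L²(ℝ^d ∖ Ω)} ≲ ‖φ‖_∞ ‖f‖_{L²(D)} δ^{-2s}`, `h₂ = 0` outside `Ω`, and
`‖h₂‖_{L²} ≲ (‖φ‖_∞ + ‖∇φ‖_∞) ‖f‖_{L²(Ω)}`. -/
theorem commutator_estimate_small_s (d : ℕ) (hd : 1 ≤ d) (s : ℝ)
    (hs : s ∈ Set.Ioo (0 : ℝ) (1 / 2)) (Λ : ℝ) (hΛ : 0 < Λ) :
    ∃ C : ℝ, 0 < C ∧
      ∀ (K : EuclideanSpace ℝ (Fin d) → EuclideanSpace ℝ (Fin d) → ℝ),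
        Measurable (Function.uncurry K) → TailBounds d s Λ K →
      ∀ (Ω D : Set (EuclideanSpace ℝ (Fin d))), IsOpen Ω → IsCompact D → D ⊆ Ω →
      ∀ δ : ℝ, 0 < δ → (∀ x ∈ D, ∀ y ∈ Ωᶜ, δ ≤ dist x y) →
      ∀ (φ : EuclideanSpace ℝ (Fin d) → ℝ), ContDiff ℝ 1 φ →
        Function.support φ ⊆ D →
      ∀ Mφ Mgφ : ℝ, (∀ v, |φ v| ≤ Mφ) → (∀ v, ‖gradient φ v‖ ≤ Mgφ) →
      ∀ (f : EuclideanSpace ℝ (Fin d) → ℝ), Measurable f →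
        MemLp f 2 (volume.restrict Ω) →
      ∀ Mf : ℝ, (∀ v, |f v| ≤ Mf) →
        (∀ v, Integrable (fun v' => f v' * (φ v' - φ v) * K v v') volume) ∧
        ∃ h₁ h₂ : EuclideanSpace ℝ (Fin d) → ℝ,
          (∀ v, (∫ v', f v' * (φ v' - φ v) * K v v') = h₁ v + h₂ v) ∧
          (∀ v, |h₁ v| ≤ C * Mφ * Mf * δ ^ (-(2 * s))) ∧
          eLpNorm (Ωᶜ.indicator h₁) 2 volume ≤
            ENNReal.ofReal
              (C * Mφ * (eLpNorm f 2 (volume.restrict D)).toReal * δ ^ (-(2 * s))) ∧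
          (∀ v ∈ Ωᶜ, h₂ v = 0) ∧
          eLpNorm h₂ 2 volume ≤
            ENNReal.ofReal
              (C * (Mφ + Mgφ) * (eLpNorm f 2 (volume.restrict Ω)).toReal) := by
  classical
  obtain ⟨hs0, hs1⟩ := hs
  set E := EuclideanSpace ℝ (Fin d)
  set κ : ℝ := Λ * (2:ℝ)^(2*s) / (1 - (2:ℝ)^(2*s-1)) with hκdef
  have hq1 : (2:ℝ)^(2*s-1) < 1 :=
    Real.rpow_lt_one_of_one_lt_of_neg one_lt_two (by linarith)
  have h1q : (0:ℝ) < 1 - (2:ℝ)^(2*s-1) := by linarith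
  have hκ : 0 < κ := div_pos (by positivity) h1q
  refine ⟨2*Λ + κ + 1, by positivity, ?_⟩
  set C : ℝ := 2*Λ + κ + 1 with hCdef
  have hΛC : Λ ≤ C := by simp only [hCdef]; linarith
  have h2ΛC : 2*Λ ≤ C := by simp only [hCdef]; linarith
  have hκC : κ ≤ C := by simp only [hCdef]; linarith
  have hC : 0 < C := by positivity
  intro K hK hT Ω D hΩ hD hDΩ δ hδ hdist φ hφ hsupp Mφ Mgφ hMφ hMgφ f hf hfL2 Mf hMf
  have hMφ0 : 0 ≤ Mφ := le_trans (abs_nonneg _) (hMφ 0)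
  have hMgφ0 : 0 ≤ Mgφ := le_trans (norm_nonneg _) (hMgφ 0)
  have hMf0 : 0 ≤ Mf := le_trans (abs_nonneg _) (hMf 0)
  have hδs : 0 < δ ^ (-(2*s)) := Real.rpow_pos_of_pos hδ _
  have hφ0 : ∀ v, v ∉ D → φ v = 0 := by
    intro v hv
    by_contra h
    exact hv (hsupp (Function.mem_support.2 h))
  -- Lipschitz bound for φ
  have hgradnorm : ∀ x, ‖fderiv ℝ φ x‖ ≤ Mgφ := by
    intro x
    have h1 : gradient φ x = (InnerProductSpace.toDual ℝ E).symm (fderiv ℝ φ x) := rfl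
    have h2 : ‖gradient φ x‖ = ‖fderiv ℝ φ x‖ := by
      rw [h1]; exact LinearIsometryEquiv.norm_map _ _
    rw [← h2]; exact hMgφ x
  have hlip : ∀ x y : E, |φ x - φ y| ≤ Mgφ * dist x y := by
    intro x y
    have := Convex.norm_image_sub_le_of_norm_fderiv_le
      (f := φ) (C := Mgφ) (s := (univ : Set E))
      (fun z _ => (hφ.differentiable one_ne_zero).differentiableAt)
      (fun z _ => hgradnorm z) convex_univ (mem_univ y) (mem_univ x)
    rw [Real.norm_eq_abs] at this
    calc |φ x - φ y| ≤ Mgφ * ‖x - y‖ := this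
      _ = Mgφ * dist x y := by rw [dist_eq_norm]
  have hmin : ∀ v v' : E, |φ v' - φ v| ≤ min (2*Mφ) (Mgφ * dist v' v) := by
    intro v v'
    refine le_min ?_ (hlip v' v)
    calc |φ v' - φ v| ≤ |φ v'| + |φ v| := abs_sub _ _
      _ ≤ Mφ + Mφ := add_le_add (hMφ v') (hMφ v)
      _ = 2*Mφ := by ring
  have hmin0 : ∀ v v' : E, 0 ≤ min (2*Mφ) (Mgφ * dist v' v) := fun v v' =>
    le_min (by positivity) (by positivity)
  -- the two kernels
  set G₂ : E → E → ℝ≥0∞ :=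
    fun v v' => ENNReal.ofReal (min (2*Mφ) (Mgφ * dist v' v) * |K v v'|) with hG₂def
  have hG₂meas : Measurable (Function.uncurry G₂) := by
    apply ENNReal.measurable_ofReal.comp
    refine Measurable.mul ?_ hK.abs
    exact measurable_const.min
      ((continuous_snd.dist continuous_fst).measurable.const_mul Mgφ)
  set G₁ : E → E → ℝ≥0∞ := fun v v' => ENNReal.ofReal |K v v'| with hG₁def
  have hG₁meas : Measurable (Function.uncurry G₁) :=
    ENNReal.measurable_ofReal.comp hK.abs
  have hB2 : (0:ℝ) ≤ 2*Mφ*Λ + Mgφ*κ := by positivity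
  have hrow2 : ∀ v : E, (∫⁻ v', G₂ v v') ≤ ENNReal.ofReal (2*Mφ*Λ + Mgφ*κ) := by
    intro v
    have := tail_min_bound hs0 hs1 hΛ (fun v' => K v v') v
      (fun r hr => (hT v r hr).1) (2*Mφ) Mgφ (by positivity) hMgφ0
    simpa [hκdef, mul_div_assoc] using this
  have hcol2 : ∀ v' : E, (∫⁻ v, G₂ v v') ≤ ENNReal.ofReal (2*Mφ*Λ + Mgφ*κ) := by
    intro v'
    have hre : ∀ x : E, G₂ x v' =
        ENNReal.ofReal (min (2*Mφ) (Mgφ * dist x v') * |K x v'|) := by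
      intro x; rw [hG₂def]; simp only; rw [dist_comm]
    rw [lintegral_congr hre]
    have := tail_min_bound hs0 hs1 hΛ (fun x => K x v') v'
      (fun r hr => (hT v' r hr).2) (2*Mφ) Mgφ (by positivity) hMgφ0
    simpa [hκdef, mul_div_assoc] using this
  -- integrability
  have humeas : ∀ v : E, Measurable (fun v' => f v' * (φ v' - φ v) * K v v') := by
    intro v
    exact (hf.mul ((hφ.continuous.measurable).sub measurable_const)).mul
      (hK.comp measurable_prodMk_left)
  have huptw : ∀ v v' : E, ENNReal.ofReal |f v' * (φ v' - φ v) * K v v'| ≤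
      ENNReal.ofReal Mf * G₂ v v' := by
    intro v v'
    rw [hG₂def]
    simp only
    rw [← ENNReal.ofReal_mul hMf0]
    refine ENNReal.ofReal_le_ofReal ?_
    rw [abs_mul, abs_mul, ← mul_assoc]
    refine mul_le_mul ?_ le_rfl (abs_nonneg _) ?_
    · exact mul_le_mul (hMf v') (hmin v v') (abs_nonneg _) hMf0
    · exact mul_nonneg hMf0 (hmin0 v v')
  have hint : ∀ v : E, Integrable (fun v' => f v' * (φ v' - φ v) * K v v') volume := by
    intro v
    refine ⟨(humeas v).aestronglyMeasurable, ?_⟩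
    rw [hasFiniteIntegral_iff_norm]
    calc (∫⁻ v', ENNReal.ofReal ‖f v' * (φ v' - φ v) * K v v'‖)
        ≤ ∫⁻ v', ENNReal.ofReal Mf * G₂ v v' := by
          refine lintegral_mono fun v' => ?_
          rw [Real.norm_eq_abs]; exact huptw v v'
      _ = ENNReal.ofReal Mf * ∫⁻ v', G₂ v v' :=
          lintegral_const_mul' _ _ ENNReal.ofReal_ne_top
      _ ≤ ENNReal.ofReal Mf * ENNReal.ofReal (2*Mφ*Λ + Mgφ*κ) :=
          mul_le_mul_right (hrow2 v) _
      _ < ⊤ := ENNReal.mul_lt_top ENNReal.ofReal_lt_top ENNReal.ofReal_lt_top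
  -- definition of the splitting
  set h₂ : E → ℝ := fun v =>
    if v ∈ Ω then ∫ v' in Ω, f v' * (φ v' - φ v) * K v v' else 0 with hh₂def
  set h₁ : E → ℝ := fun v =>
    (∫ v', f v' * (φ v' - φ v) * K v v') - h₂ v with hh₁def
  have hDball : ∀ v : E, v ∈ Ωᶜ → D ⊆ (ball v δ)ᶜ := by
    intro v hv x hx hxball
    exact absurd (mem_ball.mp hxball) (not_lt.2 (hdist x hx v hv))
  have hΩball : ∀ v : E, v ∈ D → Ωᶜ ⊆ (ball v δ)ᶜ := by
    intro v hv y hy hyball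
    have := hdist v hv y hy
    rw [dist_comm] at this
    exact absurd (mem_ball.mp hyball) (not_lt.2 this)
  -- pointwise bound for h₁
  have hpt : ∀ v, |h₁ v| ≤ Mφ * Mf * (Λ * δ^(-(2*s))) := by
    intro v
    have hRnn : (0:ℝ) ≤ Mφ * Mf * (Λ * δ^(-(2*s))) := by positivity
    by_cases hv : v ∈ Ω
    · have hsplitv : h₁ v = ∫ v' in Ωᶜ, f v' * (φ v' - φ v) * K v v' := by
        rw [hh₁def]; simp only [hh₂def, if_pos hv]
        rw [← integral_add_compl hΩ.measurableSet (hint v)]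
        ring
      by_cases hvD : v ∈ D
      · rw [hsplitv]
        have hb := norm_integral_le_lintegral_norm
          (μ := volume.restrict Ωᶜ) (fun v' => f v' * (φ v' - φ v) * K v v')
        rw [Real.norm_eq_abs] at hb
        refine le_trans hb (ENNReal.toReal_le_of_le_ofReal hRnn ?_)
        calc (∫⁻ v' in Ωᶜ, ENNReal.ofReal ‖f v' * (φ v' - φ v) * K v v'‖)
            ≤ ∫⁻ v' in Ωᶜ, ENNReal.ofReal (Mφ * Mf) * ENNReal.ofReal |K v v'| := by
              refine setLIntegral_mono' hΩ.measurableSet.compl fun v' hv' => ?_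
              rw [← ENNReal.ofReal_mul (by positivity), Real.norm_eq_abs]
              refine ENNReal.ofReal_le_ofReal ?_
              have hφv' : φ v' = 0 := hφ0 v' (fun hD' => hv' (hDΩ hD'))
              rw [abs_mul, abs_mul, hφv']
              have h1 : |(0:ℝ) - φ v| ≤ Mφ := by rw [zero_sub, abs_neg]; exact hMφ v
              refine mul_le_mul_of_nonneg_right ?_ (abs_nonneg _)
              calc |f v'| * |(0:ℝ) - φ v| ≤ Mf * Mφ :=
                  mul_le_mul (hMf v') h1 (abs_nonneg _) hMf0
                _ = Mφ * Mf := mul_comm _ _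
          _ ≤ ∫⁻ v' in (ball v δ)ᶜ, ENNReal.ofReal (Mφ * Mf) * ENNReal.ofReal |K v v'| :=
              lintegral_mono_set (hΩball v hvD)
          _ = ENNReal.ofReal (Mφ * Mf) * ∫⁻ v' in (ball v δ)ᶜ, ENNReal.ofReal |K v v'| :=
              lintegral_const_mul' _ _ ENNReal.ofReal_ne_top
          _ ≤ ENNReal.ofReal (Mφ * Mf) * ENNReal.ofReal (Λ * δ^(-(2*s))) :=
              mul_le_mul_right (hT v δ hδ).1 _
          _ = ENNReal.ofReal (Mφ * Mf * (Λ * δ^(-(2*s)))) := by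
              rw [← ENNReal.ofReal_mul (by positivity)]
      · have hφv : φ v = 0 := hφ0 v hvD
        have heq : EqOn (fun v' => f v' * (φ v' - φ v) * K v v') (fun _ => (0:ℝ)) Ωᶜ := by
          intro v' hv'
          have hφv' : φ v' = 0 := hφ0 v' (fun hD' => hv' (hDΩ hD'))
          simp [hφv', hφv]
        rw [hsplitv, setIntegral_congr_fun hΩ.measurableSet.compl heq, integral_zero]
        simpa using hRnn
    · have hφv : φ v = 0 := hφ0 v (fun hD' => hv (hDΩ hD'))
      have hh₂v : h₂ v = 0 := by rw [hh₂def]; simp only; rw [if_neg hv]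
      have hh : h₁ v = ∫ v', f v' * (φ v' - φ v) * K v v' := by
        rw [hh₁def]; simp [hh₂v]
      rw [hh]
      have hb := norm_integral_le_lintegral_norm
        (μ := volume) (fun v' => f v' * (φ v' - φ v) * K v v')
      rw [Real.norm_eq_abs] at hb
      refine le_trans hb (ENNReal.toReal_le_of_le_ofReal hRnn ?_)
      calc (∫⁻ v', ENNReal.ofReal ‖f v' * (φ v' - φ v) * K v v'‖)
          ≤ ∫⁻ v', ((ball v δ)ᶜ).indicator
              (fun v' => ENNReal.ofReal (Mφ*Mf) * ENNReal.ofReal |K v v'|) v' := by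
            refine lintegral_mono fun v' => ?_
            by_cases hvb : v' ∈ (ball v δ)ᶜ
            · rw [indicator_of_mem hvb]
              rw [← ENNReal.ofReal_mul (by positivity), Real.norm_eq_abs]
              refine ENNReal.ofReal_le_ofReal ?_
              rw [abs_mul, abs_mul, hφv, sub_zero]
              refine mul_le_mul_of_nonneg_right ?_ (abs_nonneg _)
              calc |f v'| * |φ v'| ≤ Mf * Mφ :=
                  mul_le_mul (hMf v') (hMφ v') (abs_nonneg _) hMf0
                _ = Mφ * Mf := mul_comm _ _
            · rw [indicator_of_notMem hvb]
              have hv'D : v' ∉ D := fun hD' => hvb (hDball v hv hD')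
              have hz : φ v' = 0 := hφ0 v' hv'D
              simp [hz, hφv]
        _ = ∫⁻ v' in (ball v δ)ᶜ, ENNReal.ofReal (Mφ*Mf) * ENNReal.ofReal |K v v'| :=
            lintegral_indicator measurableSet_ball.compl _
        _ = ENNReal.ofReal (Mφ * Mf) * ∫⁻ v' in (ball v δ)ᶜ, ENNReal.ofReal |K v v'| :=
            lintegral_const_mul' _ _ ENNReal.ofReal_ne_top
        _ ≤ ENNReal.ofReal (Mφ * Mf) * ENNReal.ofReal (Λ * δ^(-(2*s))) :=
            mul_le_mul_right (hT v δ hδ).1 _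
        _ = ENNReal.ofReal (Mφ * Mf * (Λ * δ^(-(2*s)))) := by
            rw [← ENNReal.ofReal_mul (by positivity)]
  -- L² bound for h₁ on Ωᶜ
  have hDm : MeasurableSet D := hD.isClosed.measurableSet
  have hL2h₁ : eLpNorm (Ωᶜ.indicator h₁) 2 volume ≤
      ENNReal.ofReal
        (C * Mφ * (eLpNorm f 2 (volume.restrict D)).toReal * δ ^ (-(2 * s))) := by
    set g₁ : E → ℝ≥0∞ := fun v' => ENNReal.ofReal (Mφ * |f v'|) with hg₁def
    have hg₁m : Measurable g₁ := ENNReal.measurable_ofReal.comp (hf.abs.const_mul Mφ)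
    set M₁ : ℝ≥0∞ := ENNReal.ofReal (Λ * δ^(-(2*s))) with hM₁def
    set T₁ : E → ℝ≥0∞ := fun v => ∫⁻ v' in D, g₁ v' * G₁ v v' with hT₁def
    have hrow1 : ∀ v ∈ Ωᶜ, (∫⁻ v' in D, G₁ v v') ≤ M₁ := fun v hv =>
      le_trans (lintegral_mono_set (hDball v hv)) (hT v δ hδ).1
    have hcol1 : ∀ v' ∈ D, (∫⁻ v in Ωᶜ, G₁ v v') ≤ M₁ := by
      intro v' hv'
      have hsub : Ωᶜ ⊆ (ball v' δ)ᶜ := by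
        intro y hy hyb
        have hdy := hdist v' hv' y hy
        rw [dist_comm] at hdy
        exact absurd (mem_ball.mp hyb) (not_lt.2 hdy)
      exact le_trans (lintegral_mono_set hsub) (hT v' δ hδ).2
    have hptw1 : ∀ v ∈ Ωᶜ, ENNReal.ofReal |h₁ v| ≤ T₁ v := by
      intro v hv
      have hφv : φ v = 0 := hφ0 v (fun hD' => hv (hDΩ hD'))
      have hh₂v : h₂ v = 0 := by rw [hh₂def]; simp only; rw [if_neg hv]
      have hh : h₁ v = ∫ v', f v' * (φ v' - φ v) * K v v' := by
        rw [hh₁def]; simp [hh₂v]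
      have hb := norm_integral_le_lintegral_norm
        (μ := volume) (fun v' => f v' * (φ v' - φ v) * K v v')
      rw [Real.norm_eq_abs] at hb
      calc ENNReal.ofReal |h₁ v|
          ≤ ENNReal.ofReal
            ((∫⁻ v', ENNReal.ofReal ‖f v' * (φ v' - φ v) * K v v'‖).toReal) := by
            rw [hh]; exact ENNReal.ofReal_le_ofReal hb
        _ ≤ ∫⁻ v', ENNReal.ofReal ‖f v' * (φ v' - φ v) * K v v'‖ :=
            ENNReal.ofReal_toReal_le
        _ ≤ ∫⁻ v', D.indicator (fun v' => g₁ v' * G₁ v v') v' := by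
            refine lintegral_mono fun v' => ?_
            by_cases hvD : v' ∈ D
            · rw [indicator_of_mem hvD, hg₁def, hG₁def]; simp only
              rw [← ENNReal.ofReal_mul (by positivity), Real.norm_eq_abs]
              refine ENNReal.ofReal_le_ofReal ?_
              rw [abs_mul, abs_mul, hφv, sub_zero]
              refine mul_le_mul_of_nonneg_right ?_ (abs_nonneg _)
              rw [mul_comm Mφ]
              exact mul_le_mul_of_nonneg_left (hMφ v') (abs_nonneg _)
            · rw [indicator_of_notMem hvD]
              have hz : φ v' = 0 := hφ0 v' hvD
              simp [hz, hφv]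
        _ = T₁ v := lintegral_indicator hDm _
    set ND := eLpNorm f 2 (volume.restrict D) with hNDdef
    have hNDlt : ND ≠ ⊤ :=
      (lt_of_le_of_lt (eLpNorm_mono_measure f (Measure.restrict_mono hDΩ le_rfl))
        hfL2.2).ne
    have hschur := schur_test volume Ωᶜ D hΩ.measurableSet.compl hDm G₁ hG₁meas
      g₁ hg₁m M₁ ENNReal.ofReal_ne_top hrow1 hcol1
    rw [eLpNorm_two_eq]
    have hg₁sq : (∫⁻ v' in D, (g₁ v')^(2:ℝ)) =
        (ENNReal.ofReal Mφ)^(2:ℝ) * ∫⁻ v' in D, (ENNReal.ofReal |f v'|)^(2:ℝ) := by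
      rw [← lintegral_const_mul' _ _
        (ENNReal.rpow_ne_top_of_nonneg (by norm_num) ENNReal.ofReal_ne_top)]
      refine lintegral_congr fun v' => ?_
      rw [hg₁def]; simp only
      rw [ENNReal.ofReal_mul hMφ0,
        ENNReal.mul_rpow_of_nonneg _ _ (by norm_num : (0:ℝ) ≤ 2)]
    have hNDsq : ND ^ (2:ℝ) = ∫⁻ v' in D, (ENNReal.ofReal |f v'|)^(2:ℝ) := by
      rw [hNDdef, eLpNorm_two_eq, ennreal_half_sq]
    have hstep1 : (∫⁻ v, ENNReal.ofReal |Ωᶜ.indicator h₁ v| ^ (2:ℝ)) ≤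
        M₁^(2:ℝ) * ((ENNReal.ofReal Mφ)^(2:ℝ) * ND^(2:ℝ)) := by
      calc (∫⁻ v, ENNReal.ofReal |Ωᶜ.indicator h₁ v| ^ (2:ℝ))
          ≤ ∫⁻ v, Ωᶜ.indicator (fun v => T₁ v ^ (2:ℝ)) v := by
            refine lintegral_mono fun v => ?_
            by_cases hv : v ∈ Ωᶜ
            · rw [indicator_of_mem hv, indicator_of_mem hv]
              exact ENNReal.rpow_le_rpow (hptw1 v hv) (by norm_num)
            · rw [indicator_of_notMem hv, indicator_of_notMem hv]
              simp [ENNReal.zero_rpow_of_pos (by norm_num : (0:ℝ) < 2)]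
        _ = ∫⁻ v in Ωᶜ, T₁ v ^ (2:ℝ) := lintegral_indicator hΩ.measurableSet.compl _
        _ ≤ M₁^(2:ℝ) * ∫⁻ v' in D, (g₁ v')^(2:ℝ) := hschur
        _ = M₁^(2:ℝ) * ((ENNReal.ofReal Mφ)^(2:ℝ) * ND^(2:ℝ)) := by
            rw [hg₁sq, hNDsq]
    calc (∫⁻ v, ENNReal.ofReal |Ωᶜ.indicator h₁ v| ^ (2:ℝ)) ^ (1/2:ℝ)
        ≤ (M₁^(2:ℝ) * ((ENNReal.ofReal Mφ)^(2:ℝ) * ND^(2:ℝ))) ^ (1/2:ℝ) :=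
          ENNReal.rpow_le_rpow hstep1 (by norm_num)
      _ = M₁ * (ENNReal.ofReal Mφ * ND) := by
          rw [ENNReal.mul_rpow_of_nonneg _ _ (by norm_num : (0:ℝ) ≤ 1/2),
            ENNReal.mul_rpow_of_nonneg _ _ (by norm_num : (0:ℝ) ≤ 1/2),
            ennreal_sq_half, ennreal_sq_half, ennreal_sq_half]
      _ = ENNReal.ofReal (Λ * δ^(-(2*s)) * Mφ) * ND := by
          rw [hM₁def, ← mul_assoc, ← ENNReal.ofReal_mul (by positivity)]
      _ ≤ ENNReal.ofReal (C * Mφ * δ^(-(2*s))) * ND := by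
          refine mul_le_mul_left (ENNReal.ofReal_le_ofReal ?_) _
          calc Λ * δ^(-(2*s)) * Mφ = Λ * (Mφ * δ^(-(2*s))) := by ring
            _ ≤ C * (Mφ * δ^(-(2*s))) := mul_le_mul_of_nonneg_right hΛC (by positivity)
            _ = C * Mφ * δ^(-(2*s)) := by ring
      _ = ENNReal.ofReal (C * Mφ * ND.toReal * δ ^ (-(2 * s))) := by
          rw [show C * Mφ * ND.toReal * δ^(-(2*s)) =
            (C * Mφ * δ^(-(2*s))) * ND.toReal by ring,
            ENNReal.ofReal_mul (by positivity : (0:ℝ) ≤ C * Mφ * δ^(-(2*s))),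
            ENNReal.ofReal_toReal hNDlt]
  -- L² bound for h₂
  have hL2h₂ : eLpNorm h₂ 2 volume ≤
      ENNReal.ofReal (C * (Mφ + Mgφ) * (eLpNorm f 2 (volume.restrict Ω)).toReal) := by
    set g₂ : E → ℝ≥0∞ := fun v' => ENNReal.ofReal |f v'| with hg₂def
    have hg₂m : Measurable g₂ := ENNReal.measurable_ofReal.comp hf.abs
    set M₂ : ℝ≥0∞ := ENNReal.ofReal (2*Mφ*Λ + Mgφ*κ) with hM₂def
    set T₂ : E → ℝ≥0∞ := fun v => ∫⁻ v' in Ω, g₂ v' * G₂ v v' with hT₂def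
    have hrow : ∀ v ∈ Ω, (∫⁻ v' in Ω, G₂ v v') ≤ M₂ := fun v _ =>
      le_trans (setLIntegral_le_lintegral _ _) (hrow2 v)
    have hcol : ∀ v' ∈ Ω, (∫⁻ v in Ω, G₂ v v') ≤ M₂ := fun v' _ =>
      le_trans (setLIntegral_le_lintegral _ _) (hcol2 v')
    have hptw2 : ∀ v, ENNReal.ofReal |h₂ v| ≤ Ω.indicator T₂ v := by
      intro v
      by_cases hv : v ∈ Ω
      · rw [indicator_of_mem hv]
        have hh2 : h₂ v = ∫ v' in Ω, f v' * (φ v' - φ v) * K v v' := by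
          rw [hh₂def]; simp only; rw [if_pos hv]
        have hb := norm_integral_le_lintegral_norm
          (μ := volume.restrict Ω) (fun v' => f v' * (φ v' - φ v) * K v v')
        rw [Real.norm_eq_abs] at hb
        calc ENNReal.ofReal |h₂ v|
            ≤ ENNReal.ofReal
              ((∫⁻ v' in Ω, ENNReal.ofReal ‖f v' * (φ v' - φ v) * K v v'‖).toReal) := by
              rw [hh2]; exact ENNReal.ofReal_le_ofReal hb
          _ ≤ ∫⁻ v' in Ω, ENNReal.ofReal ‖f v' * (φ v' - φ v) * K v v'‖ :=
              ENNReal.ofReal_toReal_le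
          _ ≤ T₂ v := by
              refine lintegral_mono fun v' => ?_
              rw [Real.norm_eq_abs, hg₂def, hG₂def]; simp only
              rw [← ENNReal.ofReal_mul (abs_nonneg _)]
              refine ENNReal.ofReal_le_ofReal ?_
              rw [abs_mul, abs_mul, ← mul_assoc]
              exact mul_le_mul_of_nonneg_right
                (mul_le_mul_of_nonneg_left (hmin v v') (abs_nonneg _)) (abs_nonneg _)
      · rw [indicator_of_notMem hv]
        have hh2 : h₂ v = 0 := by rw [hh₂def]; simp only; rw [if_neg hv]
        simp [hh2]
    set N := eLpNorm f 2 (volume.restrict Ω) with hNdef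
    have hN : N ≠ ⊤ := hfL2.2.ne
    have hschur := schur_test volume Ω Ω hΩ.measurableSet hΩ.measurableSet G₂ hG₂meas
      g₂ hg₂m M₂ ENNReal.ofReal_ne_top hrow hcol
    rw [eLpNorm_two_eq]
    have hNsq : N ^ (2:ℝ) = ∫⁻ v' in Ω, (g₂ v')^(2:ℝ) := by
      rw [hNdef, eLpNorm_two_eq, ennreal_half_sq]
    have hstep : (∫⁻ v, ENNReal.ofReal |h₂ v| ^ (2:ℝ)) ≤ M₂^(2:ℝ) * N^(2:ℝ) := by
      calc (∫⁻ v, ENNReal.ofReal |h₂ v| ^ (2:ℝ))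
          ≤ ∫⁻ v, Ω.indicator (fun v => T₂ v ^ (2:ℝ)) v := by
            refine lintegral_mono fun v => ?_
            by_cases hv : v ∈ Ω
            · rw [indicator_of_mem hv]
              refine ENNReal.rpow_le_rpow ?_ (by norm_num)
              have := hptw2 v
              rwa [indicator_of_mem hv] at this
            · have h0' := hptw2 v
              rw [indicator_of_notMem hv] at h0'
              rw [indicator_of_notMem hv]
              have hz : ENNReal.ofReal |h₂ v| = 0 := le_antisymm h0' zero_le
              rw [hz]
              simp [ENNReal.zero_rpow_of_pos (by norm_num : (0:ℝ) < 2)]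
        _ = ∫⁻ v in Ω, T₂ v ^ (2:ℝ) := lintegral_indicator hΩ.measurableSet _
        _ ≤ M₂^(2:ℝ) * ∫⁻ v' in Ω, (g₂ v')^(2:ℝ) := hschur
        _ = M₂^(2:ℝ) * N^(2:ℝ) := by rw [hNsq]
    calc (∫⁻ v, ENNReal.ofReal |h₂ v| ^ (2:ℝ)) ^ (1/2:ℝ)
        ≤ (M₂^(2:ℝ) * N^(2:ℝ)) ^ (1/2:ℝ) := ENNReal.rpow_le_rpow hstep (by norm_num)
      _ = M₂ * N := by
          rw [ENNReal.mul_rpow_of_nonneg _ _ (by norm_num : (0:ℝ) ≤ 1/2),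
            ennreal_sq_half, ennreal_sq_half]
      _ ≤ ENNReal.ofReal (C * (Mφ + Mgφ)) * N := by
          refine mul_le_mul_left (ENNReal.ofReal_le_ofReal ?_) _
          nlinarith [mul_le_mul_of_nonneg_left h2ΛC hMφ0,
            mul_le_mul_of_nonneg_left hκC hMgφ0]
      _ = ENNReal.ofReal (C * (Mφ + Mgφ) * N.toReal) := by
          rw [ENNReal.ofReal_mul (by positivity : (0:ℝ) ≤ C * (Mφ + Mgφ)),
            ENNReal.ofReal_toReal hN]
  refine ⟨hint, h₁, h₂, fun v => by rw [hh₁def]; ring, ?_, hL2h₁,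
    fun v hv => by rw [hh₂def]; simp only; rw [if_neg hv], hL2h₂⟩
  intro v
  calc |h₁ v| ≤ Mφ * Mf * (Λ * δ^(-(2*s))) := hpt v
    _ = Λ * (Mφ * Mf * δ^(-(2*s))) := by ring
    _ ≤ C * (Mφ * Mf * δ^(-(2*s))) :=
        mul_le_mul_of_nonneg_right hΛC (by positivity)
    _ = C * Mφ * Mf * δ^(-(2*s)) := by ring
end
end

section
/- Positive level sets from mass, energy and entropy bounds: let d ≥ 1 and M₁, E₀, H₀ > 0. There exist constants r > 0, ℓ > 0 and m > 0, depending only on d, M₁, E₀ and H₀, such that every measurable f : ℝ^d → [0,∞) with f·ln f integrable (interpreting f ln f as 0 where f = 0) which satisfies ∫_{ℝ^d} f(v) dv ≥ M₁, ∫_{ℝ^d} |v|² f(v) dv ≤ E₀, and ∫_{ℝ^d} f(v) ln f(v) dv ≤ H₀, also satisfies |{ v ∈ B_r : f(v) > ℓ }| ≥ m, where |·| is Lebesgue measure and B_r is the open ball of radius r centered at the origin of ℝ^d. -/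
open MeasureTheory Metric Set

noncomputable section

private lemma log_le_div_exp {s : ℝ} (hs : 0 < s) : Real.log s ≤ s / Real.exp 1 := by
  have h := Real.log_le_sub_one_of_pos (x := s / Real.exp 1) (by positivity)
  rw [Real.log_div (ne_of_gt hs) (Real.exp_ne_zero 1), Real.log_exp] at h
  linarith

private lemma log_le_sqrt' {s : ℝ} (hs : 0 < s) :
    Real.log s ≤ 2 / Real.exp 1 * Real.sqrt s := by
  have h1 : Real.log (Real.sqrt s) ≤ Real.sqrt s / Real.exp 1 :=
    log_le_div_exp (Real.sqrt_pos.2 hs)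
  rw [Real.log_sqrt hs.le] at h1
  have h2 := Real.exp_pos 1
  calc Real.log s = 2 * (Real.log s / 2) := by ring
    _ ≤ 2 * (Real.sqrt s / Real.exp 1) := by linarith
    _ = 2 / Real.exp 1 * Real.sqrt s := by ring

private lemma neg_part_bound {x c : ℝ} (hx : 0 ≤ x) (hc : 0 ≤ c) :
    max (-(x * Real.log x)) 0 ≤ c * x + 2 / Real.exp 1 * Real.exp (-(1/2) * c) := by
  have hexp := Real.exp_pos 1
  have hrhs : (0:ℝ) ≤ c * x + 2 / Real.exp 1 * Real.exp (-(1/2) * c) := by positivity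
  rcases eq_or_lt_of_le hx with h0 | h0
  · subst h0; simpa using hrhs
  rcases le_or_gt 1 x with h1 | h1
  · have hnn : 0 ≤ x * Real.log x := mul_nonneg hx (Real.log_nonneg h1)
    rw [max_eq_right (neg_nonpos.2 hnn)]; exact hrhs
  have hlogneg : Real.log x < 0 := Real.log_neg h0 h1
  have hmax : max (-(x * Real.log x)) 0 = -(x * Real.log x) :=
    max_eq_left (by nlinarith)
  rw [hmax]
  rcases le_or_gt (Real.exp (-c)) x with h2 | h2
  · have hlc : -c ≤ Real.log x := by
      have := Real.log_le_log (Real.exp_pos (-c)) h2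
      simpa using this
    nlinarith [(Real.exp_pos (-(1/2) * c)).le, (div_pos two_pos hexp).le,
      mul_nonneg (div_pos two_pos hexp).le (Real.exp_pos (-(1/2) * c)).le]
  · have hinv : Real.log x⁻¹ ≤ 2 / Real.exp 1 * Real.sqrt x⁻¹ := log_le_sqrt' (by positivity)
    have hxlog : -(x * Real.log x) = x * Real.log x⁻¹ := by rw [Real.log_inv]; ring
    have hsq : x * Real.sqrt x⁻¹ = Real.sqrt x := by
      rw [Real.sqrt_inv]
      have hs0 : Real.sqrt x ≠ 0 := ne_of_gt (Real.sqrt_pos.2 h0)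
      field_simp
      rw [Real.sq_sqrt h0.le]
    have hsle : Real.sqrt x ≤ Real.exp (-(1/2) * c) := by
      have h3 : Real.sqrt x ≤ Real.sqrt (Real.exp (-c)) := Real.sqrt_le_sqrt h2.le
      have h4 : Real.sqrt (Real.exp (-c)) = Real.exp (-(1/2) * c) := by
        rw [show (-c) = (-(1/2) * c) + (-(1/2) * c) by ring, Real.exp_add,
          Real.sqrt_mul_self (Real.exp_pos _).le]
      rwa [h4] at h3
    calc -(x * Real.log x) = x * Real.log x⁻¹ := hxlog
      _ ≤ x * (2 / Real.exp 1 * Real.sqrt x⁻¹) := by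
          apply mul_le_mul_of_nonneg_left hinv hx
      _ = 2 / Real.exp 1 * (x * Real.sqrt x⁻¹) := by ring
      _ = 2 / Real.exp 1 * Real.sqrt x := by rw [hsq]
      _ ≤ 2 / Real.exp 1 * Real.exp (-(1/2) * c) := by
          apply mul_le_mul_of_nonneg_left hsle (div_pos two_pos hexp).le
      _ ≤ c * x + 2 / Real.exp 1 * Real.exp (-(1/2) * c) := by nlinarith

private lemma integrable_gauss (d : ℕ) :
    Integrable (fun v : EuclideanSpace ℝ (Fin d) => Real.exp (-(1/2) * ‖v‖^2)) volume := by
  have h := (GaussianFourier.integrable_cexp_neg_mul_sq_norm_add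
    (b := (1/2 : ℂ)) (by norm_num) 0 (0 : EuclideanSpace ℝ (Fin d))).norm
  refine h.congr (Filter.Eventually.of_forall fun v => ?_)
  have e1 : -(1/2:ℂ) * (‖v‖:ℂ)^2 + 0 * ((inner ℝ (0 : EuclideanSpace ℝ (Fin d)) v : ℝ) : ℂ)
      = ((-(1/2) * ‖v‖^2 : ℝ) : ℂ) := by push_cast; ring
  simp only [e1, Complex.norm_exp, Complex.ofReal_re]

set_option maxHeartbeats 1000000 in
/-- **Positive level sets from mass, energy and entropy bounds.** Given `M₁, E₀, H₀ > 0`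
there are `r, ℓ, m > 0`, depending only on `d`, `M₁`, `E₀`, `H₀`, such that any
nonnegative `f` with mass at least `M₁`, energy at most `E₀` and entropy at most `H₀`
satisfies `|{v ∈ B_r : f(v) > ℓ}| ≥ m`. (Here `Real.log 0 = 0`, so `f ln f` is
interpreted as `0` where `f` vanishes.) -/
theorem level_set_from_mass_energy_entropy (d : ℕ) (hd : 1 ≤ d)
    (M₁ E₀ H₀ : ℝ) (hM : 0 < M₁) (hE : 0 < E₀) (hH : 0 < H₀) :
    ∃ r > (0 : ℝ), ∃ ℓ > (0 : ℝ), ∃ m > (0 : ℝ),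
      ∀ f : EuclideanSpace ℝ (Fin d) → ℝ, Measurable f → (∀ v, 0 ≤ f v) →
        Integrable f volume →
        Integrable (fun v => ‖v‖ ^ 2 * f v) volume →
        Integrable (fun v => f v * Real.log (f v)) volume →
        M₁ ≤ ∫ v, f v →
        (∫ v, ‖v‖ ^ 2 * f v) ≤ E₀ →
        (∫ v, f v * Real.log (f v)) ≤ H₀ →
        ENNReal.ofReal m ≤
          volume {v : EuclideanSpace ℝ (Fin d) | v ∈ Metric.ball 0 r ∧ ℓ < f v} := by
  have hgauss := integrable_gauss d
  set G : ℝ := ∫ v : EuclideanSpace ℝ (Fin d), Real.exp (-(1/2) * ‖v‖^2) with hGdef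
  have hG0 : 0 ≤ G := integral_nonneg fun v => (Real.exp_pos _).le
  set A : ℝ := H₀ + E₀ + 2 / Real.exp 1 * G with hAdef
  have hexp1 := Real.exp_pos 1
  have hA0 : 0 < A := by positivity
  set r : ℝ := Real.sqrt (2 * E₀ / M₁) with hrdef
  have hr0 : 0 < r := Real.sqrt_pos.2 (by positivity)
  have hr2 : r ^ 2 = 2 * E₀ / M₁ := Real.sq_sqrt (by positivity)
  set B : Set (EuclideanSpace ℝ (Fin d)) := Metric.ball 0 r with hBdef
  have hBmeas : MeasurableSet B := measurableSet_ball
  have hvol_lt : volume B < ⊤ := measure_ball_lt_top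
  set volB : ℝ := (volume B).toReal with hvolBdef
  have hvolB0 : 0 < volB :=
    ENNReal.toReal_pos (measure_ball_pos volume 0 hr0).ne' hvol_lt.ne
  set ℓ : ℝ := min (M₁ / (8 * volB)) 1 with hldef
  have hl0 : 0 < ℓ := lt_min (by positivity) one_pos
  set K : ℝ := Real.exp (1 + 8 * A / M₁) with hKdef
  have hK0 : 0 < K := Real.exp_pos _
  have hlogK : Real.log K = 1 + 8 * A / M₁ := Real.log_exp _
  refine ⟨r, hr0, ℓ, hl0, M₁ / (4 * K), by positivity, ?_⟩
  intro f hfm hf0 hfi hfE hfL hmass henergy hent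
  -- Step A : mass in the ball
  have hsplit : (∫ v in B, f v) + ∫ v in Bᶜ, f v = ∫ v, f v := integral_add_compl hBmeas hfi
  have hc0 : (0:ℝ) < 2 * E₀ / M₁ := by positivity
  have houter : ∫ v in Bᶜ, f v ≤ M₁ / 2 := by
    have h1 : ∫ v in Bᶜ, f v ≤ ∫ v in Bᶜ, (2 * E₀ / M₁)⁻¹ * (‖v‖ ^ 2 * f v) := by
      apply setIntegral_mono_on hfi.integrableOn ((hfE.const_mul _).integrableOn) hBmeas.compl
      intro v hv
      have hvn : r ≤ ‖v‖ := by
        simp only [hBdef, Set.mem_compl_iff, Metric.mem_ball, dist_zero_right, not_lt] at hv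
        exact hv
      have h2 : 2 * E₀ / M₁ ≤ ‖v‖ ^ 2 := by
        rw [← hr2]; exact pow_le_pow_left₀ hr0.le hvn 2
      calc f v = (2 * E₀ / M₁)⁻¹ * (2 * E₀ / M₁ * f v) := by field_simp
        _ ≤ (2 * E₀ / M₁)⁻¹ * (‖v‖ ^ 2 * f v) := by
            apply mul_le_mul_of_nonneg_left _ (inv_nonneg.2 hc0.le)
            exact mul_le_mul_of_nonneg_right h2 (hf0 v)
    rw [integral_const_mul] at h1
    have h3 : ∫ v in Bᶜ, ‖v‖ ^ 2 * f v ≤ E₀ :=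
      le_trans (setIntegral_le_integral hfE
        (Filter.Eventually.of_forall fun v => mul_nonneg (sq_nonneg _) (hf0 v))) henergy
    have h4 : (2 * E₀ / M₁)⁻¹ * ∫ v in Bᶜ, ‖v‖ ^ 2 * f v ≤ (2 * E₀ / M₁)⁻¹ * E₀ :=
      mul_le_mul_of_nonneg_left h3 (inv_nonneg.2 hc0.le)
    have h5 : (2 * E₀ / M₁)⁻¹ * E₀ = M₁ / 2 := by field_simp
    linarith
  have hinner : M₁ / 2 ≤ ∫ v in B, f v := by linarith
  -- Step B : entropy positive part bound
  set g : EuclideanSpace ℝ (Fin d) → ℝ := fun v => max (-(f v * Real.log (f v))) 0 with hgdef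
  have hgi : Integrable g volume := hfL.neg.pos_part
  have hgb : ∫ v, g v ≤ E₀ + 2 / Real.exp 1 * G := by
    have hle : ∀ v, g v ≤ ‖v‖ ^ 2 * f v + 2 / Real.exp 1 * Real.exp (-(1/2) * ‖v‖ ^ 2) :=
      fun v => neg_part_bound (hf0 v) (sq_nonneg ‖v‖)
    have h := integral_mono hgi (hfE.add (hgauss.const_mul _)) hle
    simp only [Pi.add_apply] at h
    rw [integral_add hfE (hgauss.const_mul _), integral_const_mul] at h
    linarith
  set p : EuclideanSpace ℝ (Fin d) → ℝ := fun v => max (f v * Real.log (f v)) 0 with hpdef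
  have hpi : Integrable p volume := hfL.pos_part
  have hp0 : ∀ v, 0 ≤ p v := fun v => le_max_right _ _
  have hpb : ∫ v, p v ≤ A := by
    have hpe : ∀ v, p v = f v * Real.log (f v) + g v := by
      intro v
      rcases le_total 0 (f v * Real.log (f v)) with h | h
      · rw [hpdef, hgdef]; simp only
        rw [max_eq_left h, max_eq_right (neg_nonpos.2 h), add_zero]
      · rw [hpdef, hgdef]; simp only
        rw [max_eq_right h, max_eq_left (neg_nonneg.2 h)]; ring
    calc ∫ v, p v = ∫ v, (f v * Real.log (f v) + g v) := by
          exact integral_congr_ae (Filter.Eventually.of_forall hpe)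
      _ = (∫ v, f v * Real.log (f v)) + ∫ v, g v := integral_add hfL hgi
      _ ≤ H₀ + (E₀ + 2 / Real.exp 1 * G) := add_le_add hent hgb
      _ = A := by rw [hAdef]; ring
  -- Step C : tail above K
  set S : Set (EuclideanSpace ℝ (Fin d)) := B ∩ {v | K < f v} with hSdef
  have hSmeas : MeasurableSet S := hBmeas.inter (measurableSet_lt measurable_const hfm)
  have hStail : ∫ v in S, f v ≤ M₁ / 8 := by
    have hlogK0 : 0 < Real.log K := by rw [hlogK]; positivity
    have h1 : Real.log K * ∫ v in S, f v ≤ ∫ v in S, f v * Real.log (f v) := by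
      rw [← integral_const_mul]
      apply setIntegral_mono_on ((hfi.const_mul _).integrableOn) hfL.integrableOn hSmeas
      intro v hv
      have hvK : K < f v := hv.2
      have hlog : Real.log K ≤ Real.log (f v) := Real.log_le_log hK0 hvK.le
      calc Real.log K * f v = f v * Real.log K := mul_comm _ _
        _ ≤ f v * Real.log (f v) := mul_le_mul_of_nonneg_left hlog (hf0 v)
    have h2 : ∫ v in S, f v * Real.log (f v) ≤ ∫ v in S, p v :=
      setIntegral_mono_on hfL.integrableOn hpi.integrableOn hSmeas
        (fun v _ => le_max_left _ _)
    have h3 : ∫ v in S, p v ≤ ∫ v, p v :=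
      setIntegral_le_integral hpi (Filter.Eventually.of_forall hp0)
    have h4 : Real.log K * ∫ v in S, f v ≤ A := by linarith
    have h6 : 0 ≤ ∫ v in S, f v := setIntegral_nonneg hSmeas fun v _ => hf0 v
    have h5 : 8 * A / M₁ * ∫ v in S, f v ≤ A := by
      refine le_trans (mul_le_mul_of_nonneg_right ?_ h6) h4
      rw [hlogK]; linarith
    rw [div_mul_eq_mul_div, div_le_iff₀ hM] at h5
    nlinarith
  -- Step D : small values
  set T : Set (EuclideanSpace ℝ (Fin d)) := B ∩ {v | f v ≤ ℓ} with hTdef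
  have hTmeas : MeasurableSet T := hBmeas.inter (measurableSet_le hfm measurable_const)
  have hTvol : volume T < ⊤ := lt_of_le_of_lt (measure_mono inter_subset_left) hvol_lt
  have hTsmall : ∫ v in T, f v ≤ M₁ / 8 := by
    have h1 : ∫ v in T, f v ≤ ∫ _ in T, ℓ :=
      setIntegral_mono_on hfi.integrableOn
        (integrableOn_const hTvol.ne) hTmeas (fun v hv => hv.2)
    rw [setIntegral_const, smul_eq_mul, measureReal_def] at h1
    have h2 : (volume T).toReal ≤ volB :=
      ENNReal.toReal_mono hvol_lt.ne (measure_mono inter_subset_left)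
    have h3 : ℓ ≤ M₁ / (8 * volB) := min_le_left _ _
    have h4 : ℓ * (8 * volB) ≤ M₁ := by
      rw [← le_div_iff₀ (by positivity)]; exact h3
    have h5 := mul_le_mul_of_nonneg_right h2 hl0.le
    linarith
  -- Step E : combine
  set W : Set (EuclideanSpace ℝ (Fin d)) := B ∩ {v | ℓ < f v} with hWdef
  have hWmeas : MeasurableSet W := hBmeas.inter (measurableSet_lt measurable_const hfm)
  have hWvol : volume W < ⊤ := lt_of_le_of_lt (measure_mono inter_subset_left) hvol_lt
  have hsplit2 : ∫ v in B, f v = (∫ v in T, f v) + ∫ v in W, f v := by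
    have hunion : T ∪ W = B := by
      ext v
      simp only [hTdef, hWdef, Set.mem_union, Set.mem_inter_iff, Set.mem_setOf_eq]
      constructor
      · rintro (⟨h, _⟩ | ⟨h, _⟩) <;> exact h
      · intro h
        rcases le_or_gt (f v) ℓ with h' | h'
        exacts [Or.inl ⟨h, h'⟩, Or.inr ⟨h, h'⟩]
    have hdisj : Disjoint T W := by
      rw [Set.disjoint_left]
      rintro v ⟨_, h1⟩ ⟨_, h2⟩
      simp only [Set.mem_setOf_eq] at h1 h2
      exact absurd h1 (not_le.2 h2)
    rw [← hunion, setIntegral_union hdisj hWmeas hfi.integrableOn hfi.integrableOn]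
  set U1 : Set (EuclideanSpace ℝ (Fin d)) := W ∩ {v | f v ≤ K} with hU1def
  set U2 : Set (EuclideanSpace ℝ (Fin d)) := W ∩ {v | K < f v} with hU2def
  have hU1meas : MeasurableSet U1 := hWmeas.inter (measurableSet_le hfm measurable_const)
  have hU2meas : MeasurableSet U2 := hWmeas.inter (measurableSet_lt measurable_const hfm)
  have hsplit3 : ∫ v in W, f v = (∫ v in U1, f v) + ∫ v in U2, f v := by
    have hunion : U1 ∪ U2 = W := by
      ext v
      simp only [hU1def, hU2def, Set.mem_union, Set.mem_inter_iff, Set.mem_setOf_eq]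
      constructor
      · rintro (⟨h, _⟩ | ⟨h, _⟩) <;> exact h
      · intro h
        rcases le_or_gt (f v) K with h' | h'
        exacts [Or.inl ⟨h, h'⟩, Or.inr ⟨h, h'⟩]
    have hdisj : Disjoint U1 U2 := by
      rw [Set.disjoint_left]
      rintro v ⟨_, h1⟩ ⟨_, h2⟩
      simp only [Set.mem_setOf_eq] at h1 h2
      exact absurd h1 (not_le.2 h2)
    rw [← hunion, setIntegral_union hdisj hU2meas hfi.integrableOn hfi.integrableOn]
  have hU1vol : volume U1 < ⊤ := lt_of_le_of_lt (measure_mono inter_subset_left) hWvol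
  have hU1le : ∫ v in U1, f v ≤ K * (volume W).toReal := by
    have h1 : ∫ v in U1, f v ≤ ∫ _ in U1, K :=
      setIntegral_mono_on hfi.integrableOn
        (integrableOn_const hU1vol.ne) hU1meas (fun v hv => hv.2)
    rw [setIntegral_const, smul_eq_mul, measureReal_def] at h1
    have h2 : (volume U1).toReal ≤ (volume W).toReal :=
      ENNReal.toReal_mono hWvol.ne (measure_mono inter_subset_left)
    nlinarith
  have hU2le : ∫ v in U2, f v ≤ ∫ v in S, f v := by
    apply setIntegral_mono_set hfi.integrableOn
      (Filter.Eventually.of_forall fun v => hf0 v)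
    apply HasSubset.Subset.eventuallyLE
    rintro v ⟨⟨hB', _⟩, hK'⟩
    exact ⟨hB', hK'⟩
  -- conclude
  have hfinal : M₁ / (4 * K) ≤ (volume W).toReal := by
    have : M₁ / 2 ≤ M₁ / 8 + (K * (volume W).toReal + M₁ / 8) := by
      calc M₁ / 2 ≤ ∫ v in B, f v := hinner
        _ = (∫ v in T, f v) + ((∫ v in U1, f v) + ∫ v in U2, f v) := by
            rw [hsplit2, hsplit3]
        _ ≤ M₁ / 8 + (K * (volume W).toReal + M₁ / 8) := by
            have := le_trans hU2le hStail
            gcongr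
    rw [div_le_iff₀ (by positivity)]
    nlinarith
  have hset : {v : EuclideanSpace ℝ (Fin d) | v ∈ Metric.ball 0 r ∧ ℓ < f v} = W := by
    ext v; simp [hWdef, hBdef, Set.mem_inter_iff]
  rw [hset]
  calc ENNReal.ofReal (M₁ / (4 * K)) ≤ ENNReal.ofReal (volume W).toReal :=
        ENNReal.ofReal_le_ofReal hfinal
    _ = volume W := ENNReal.ofReal_toReal hWvol.ne
end
end
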